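/- arXiv:1211.0431 — 2 statements merged into one kernel-verified Lean document; each statement's English description precedes it below -/
import Mathlib

section
/- Let (a_k)_{k≥0} be a sequence of real numbers with a_0 = 1, a_k = 0 for all odd k, and a_{2m} = (2m-1)!! · a_2^m for all m ≥ 1 (the moments of a centered Gaussian-like functional). Fix real numbers C_2, C_4, ..., C_{2n} and set b_{2m} := a_{2m} + Σ_{k=0}^{2m-2} C(2m,k) · C_{2m-k} · a_k for m = 1,...,n, where C_j = 0 for odd j. Then b_{2m} = (2m-1)!! · b_2^m for all m = 1,...,n and all such sequences (a_k) if and only if C_{2m} = (2m-1)!! · C_2^m for all m = 1,...,n. -/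
/-!
Writing `γ_v(m) := (2m-1)‼ vᵐ` for the `2m`-th moment of a centred Gaussian of variance `v`,
the identity `binom(2m,2j) (2j-1)‼ (2(m-j)-1)‼ = (2m-1)‼ binom(m,j)` (count perfect matchings of
`2m` points according to how many of them lie in a fixed `2j`-subset) together with the binomial
theorem gives `∑ⱼ binom(2m,2j) γ_t(m-j) γ_s(j) = γ_{s+t}(m)`: Gaussian moments convolve like
independent Gaussians, and their variances add. Since `a` vanishes at odd indices, `b_{2m}` is
exactly such a convolution of `a` with `C` (where `C₀ := 1`), which proves the "if" direction
with `b₂ = a₂ + C₂`. For "only if", take the degenerate sequence `a = δ₀` (variance `a₂ = 0`),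
for which `b_{2m} = C_{2m}`.
-/

open Finset Nat

namespace Nat

theorem doubleFactorial_two_mul_sub_one_mul (k : ℕ) : (2 * k - 1)‼ * (2 ^ k * k !) = (2 * k)! := by
  cases k with
  | zero => simp
  | succ k =>
    have hodd : 2 * (k + 1) - 1 = 2 * k + 1 := by omega
    rw [hodd, ← doubleFactorial_two_mul, show 2 * (k + 1) = 2 * k + 1 + 1 by ring,
      factorial_eq_mul_doubleFactorial, mul_comm]

theorem choose_two_mul_mul_doubleFactorial {m j : ℕ} (h : j ≤ m) :
    choose (2 * m) (2 * j) * ((2 * j - 1)‼ * (2 * (m - j) - 1)‼) = (2 * m - 1)‼ * choose m j := by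
  apply Nat.eq_of_mul_eq_mul_right (show 0 < 2 ^ j * j ! * (2 ^ (m - j) * (m - j)!) by positivity)
  have hpow : 2 ^ j * 2 ^ (m - j) = 2 ^ m := by rw [← pow_add, Nat.add_sub_cancel' h]
  calc choose (2 * m) (2 * j) * ((2 * j - 1)‼ * (2 * (m - j) - 1)‼)
        * (2 ^ j * j ! * (2 ^ (m - j) * (m - j)!))
      = choose (2 * m) (2 * j) * ((2 * j - 1)‼ * (2 ^ j * j !))
          * ((2 * (m - j) - 1)‼ * (2 ^ (m - j) * (m - j)!)) := by ring
    _ = choose (2 * m) (2 * j) * (2 * j)! * (2 * m - 2 * j)! := by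
        rw [doubleFactorial_two_mul_sub_one_mul, doubleFactorial_two_mul_sub_one_mul,
          Nat.mul_sub_left_distrib]
    _ = (2 * m - 1)‼ * (2 ^ m * m !) := by
        rw [choose_mul_factorial_mul_factorial (by omega), doubleFactorial_two_mul_sub_one_mul]
    _ = (2 * m - 1)‼ * choose m j * (2 ^ j * j ! * (2 ^ (m - j) * (m - j)!)) := by
        rw [← choose_mul_factorial_mul_factorial h, ← hpow]; ring

end Nat

theorem Finset.sum_range_two_mul_of_odd {M : Type*} [AddCommMonoid M] {f : ℕ → M}
    (hf : ∀ k, Odd k → f k = 0) (m : ℕ) : ∑ k ∈ range (2 * m), f k = ∑ j ∈ range m, f (2 * j) := by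
  induction m with
  | zero => simp
  | succ m ih =>
    rw [show 2 * (m + 1) = 2 * m + 1 + 1 by ring, sum_range_succ, sum_range_succ, ih,
      sum_range_succ, hf _ (odd_two_mul_add_one m), add_zero]

theorem Finset.sum_range_two_mul_sub_one_of_odd {M : Type*} [AddCommMonoid M] {f : ℕ → M}
    (hf : ∀ k, Odd k → f k = 0) (m : ℕ) :
    ∑ k ∈ range (2 * m - 1), f k = ∑ j ∈ range m, f (2 * j) := by
  rw [← sum_range_two_mul_of_odd hf]
  cases m with
  | zero => simp
  | succ m =>
    rw [show 2 * (m + 1) = 2 * m + 1 + 1 by ring, sum_range_succ _ (2 * m + 1),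
      hf _ (odd_two_mul_add_one m), add_zero, Nat.add_sub_cancel]

noncomputable def gaussianMoment (v : ℝ) (m : ℕ) : ℝ := (2 * m - 1)‼ * v ^ m

@[simp]
theorem gaussianMoment_zero (v : ℝ) : gaussianMoment v 0 = 1 := by simp [gaussianMoment]

theorem gaussianMoment_add (s t : ℝ) (m : ℕ) :
    gaussianMoment (s + t) m = ∑ j ∈ range (m + 1),
      (choose (2 * m) (2 * j) : ℝ) * gaussianMoment t (m - j) * gaussianMoment s j := by
  have hterm : ∀ j ∈ range (m + 1), (choose (2 * m) (2 * j) : ℝ)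
      * gaussianMoment t (m - j) * gaussianMoment s j
      = (2 * m - 1)‼ * (s ^ j * t ^ (m - j) * choose m j) := by
    intro j hj
    have hcomb := congrArg (Nat.cast : ℕ → ℝ)
      (choose_two_mul_mul_doubleFactorial (Nat.lt_succ_iff.mp (mem_range.mp hj)))
    push_cast at hcomb
    simp only [gaussianMoment]
    linear_combination s ^ j * t ^ (m - j) * hcomb
  rw [sum_congr rfl hterm, ← mul_sum, ← add_pow, gaussianMoment]

theorem wick_renormalization_iff_general (n : ℕ)
    (C : ℕ → ℝ) :
    (∀ a : ℕ → ℝ, a 0 = 1 → (∀ k, Odd k → a k = 0) →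
        (∀ m, 1 ≤ m → a (2 * m) = (Nat.doubleFactorial (2 * m - 1) : ℝ) * (a 2) ^ m) →
        ∀ m, 1 ≤ m → m ≤ n →
          (a (2 * m) + ∑ k ∈ range (2 * m - 1),
              (Nat.choose (2 * m) k : ℝ) * C (2 * m - k) * a k) =
            (Nat.doubleFactorial (2 * m - 1) : ℝ) *
              (a 2 + ∑ k ∈ range 1, (Nat.choose 2 k : ℝ) * C (2 - k) * a k) ^ m)
    ↔ (∀ m, 1 ≤ m → m ≤ n → C (2 * m) = (Nat.doubleFactorial (2 * m - 1) : ℝ) * (C 2) ^ m) := by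
  constructor
  · intro h m hm hmn
    have key := h (fun k ↦ if k = 0 then 1 else 0) (by simp)
      (fun k hk ↦ by simp [hk.pos.ne']) (fun j hj ↦ by simp [show j ≠ 0 by omega]) m hm hmn
    rw [sum_eq_single_of_mem 0 (mem_range.mpr (by omega)) (fun k _ hk ↦ by simp [hk])] at key
    simpa [show 2 * m ≠ 0 by omega] using key
  · intro hC a ha0 haodd hamom m hm hmn
    have ha : ∀ j, a (2 * j) = gaussianMoment (a 2) j := by
      rintro (_ | j)
      · simp [ha0]
      · exact hamom _ j.succ_pos
    have hc : ∀ j < m, C (2 * m - 2 * j) = gaussianMoment (C 2) (m - j) := fun j hj ↦ by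
      rw [← Nat.mul_sub_left_distrib]; exact hC _ (by omega) (by omega)
    have hb₂ : a 2 + ∑ k ∈ range 1, (choose 2 k : ℝ) * C (2 - k) * a k = a 2 + C 2 := by simp [ha0]
    rw [hb₂, sum_range_two_mul_sub_one_of_odd (fun k hk ↦ by simp [haodd k hk]),
      ← gaussianMoment, gaussianMoment_add, sum_range_succ, add_comm]
    congr 1
    · exact sum_congr rfl fun j hj ↦ by rw [hc j (mem_range.mp hj), ha]
    · simp [ha]

theorem wick_renormalization_iff (n : ℕ) (hn : 1 ≤ n)
    (C : ℕ → ℝ) (hCodd : ∀ j, Odd j → C j = 0) :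
    (∀ a : ℕ → ℝ, a 0 = 1 → (∀ k, Odd k → a k = 0) →
        (∀ m, 1 ≤ m → a (2 * m) = (Nat.doubleFactorial (2 * m - 1) : ℝ) * (a 2) ^ m) →
        ∀ m, 1 ≤ m → m ≤ n →
          (a (2 * m) + ∑ k ∈ range (2 * m - 1),
              (Nat.choose (2 * m) k : ℝ) * C (2 * m - k) * a k) =
            (Nat.doubleFactorial (2 * m - 1) : ℝ) *
              (a 2 + ∑ k ∈ range 1, (Nat.choose 2 k : ℝ) * C (2 - k) * a k) ^ m)
    ↔ (∀ m, 1 ≤ m → m ≤ n → C (2 * m) = (Nat.doubleFactorial (2 * m - 1) : ℝ) * (C 2) ^ m) :=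
  wick_renormalization_iff_general n C
end

section
/- ('if' direction) Suppose C_{2m} = (2m-1)!! · C_2^m for m = 1,...,n, and let a_{2m} = (2m-1)!! · a_2^m with a_k = 0 for odd k, a_0 = 1. Define b_{2m} = Σ_{k=0}^{2m} C(2m,k) · C_{2m-k} · a_k with C_0 = 1 and C_j = 0 for odd j and for j < 0 interpreted as absent. Then b_{2m} = (2m-1)!! · (a_2 + C_2)^m = (2m-1)!! · b_2^m for all m = 1,...,n. -/
/-!
Since `a` vanishes at odd indices only the terms `k = 2j` contribute, and after inserting the
moment formulas for `a` and `C` such a term becomes `C(2m,2j) (2j-1)‼ (2(m-j)-1)‼ a₂^j C₂^(m-j)`. Since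
`(2k-1)‼ 2^k k! = (2k)!`, the coefficient equals `(2m-1)‼ C(m,j)`, so the binomial theorem
gives `(2m-1)‼ (a₂ + C₂)^m`: the Gaussian moments of a sum of two independent centred Gaussians.
-/

open Finset
open scoped Nat

theorem Nat.doubleFactorial_two_mul_sub_one_mul_s6 (k : ℕ) :
    (2 * k - 1)‼ * (2 ^ k * k !) = (2 * k)! := by
  cases k with
  | zero => rfl
  | succ k =>
    rw [← Nat.doubleFactorial_two_mul, show 2 * (k + 1) = 2 * k + 1 + 1 by ring,
      Nat.factorial_eq_mul_doubleFactorial, Nat.add_sub_cancel, mul_comm]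

theorem Nat.choose_two_mul_mul_doubleFactorial_s6 (j l : ℕ) :
    (2 * (j + l)).choose (2 * j) * (2 * j - 1)‼ * (2 * l - 1)‼ =
      (2 * (j + l) - 1)‼ * (j + l).choose j := by
  have hD : 0 < 2 ^ j * j ! * (2 ^ l * l !) := by positivity
  refine Nat.eq_of_mul_eq_mul_right hD ?_
  calc (2 * (j + l)).choose (2 * j) * (2 * j - 1)‼ * (2 * l - 1)‼ * (2 ^ j * j ! * (2 ^ l * l !))
      = (2 * j + 2 * l).choose (2 * j) * (2 * j)! * (2 * l)! := by
        rw [← Nat.doubleFactorial_two_mul_sub_one_mul_s6 j, ← Nat.doubleFactorial_two_mul_sub_one_mul_s6 l,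
          mul_add]
        ring
    _ = (2 * (j + l))! := by
        rw [Nat.choose_symm_add, Nat.add_choose_mul_factorial_mul_factorial, mul_add]
    _ = (2 * (j + l) - 1)‼ * (j + l).choose j * (2 ^ j * j ! * (2 ^ l * l !)) := by
        rw [← Nat.doubleFactorial_two_mul_sub_one_mul_s6, add_comm j l,
          ← Nat.add_choose_mul_factorial_mul_factorial l j, pow_add]
        ring

theorem Finset.sum_range_two_mul_add_one_of_odd {M : Type*} [AddCommMonoid M] (f : ℕ → M)
    (hf : ∀ k, Odd k → f k = 0) (m : ℕ) :
    ∑ k ∈ range (2 * m + 1), f k = ∑ j ∈ range (m + 1), f (2 * j) := by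
  induction m with
  | zero => simp
  | succ m ih =>
    rw [show 2 * (m + 1) + 1 = 2 * m + 1 + 1 + 1 by ring, sum_range_succ, sum_range_succ, ih,
      hf _ (odd_two_mul_add_one m), sum_range_succ (n := m + 1), add_zero, mul_add_one]

theorem sum_choose_two_mul_mul_doubleFactorial_mul_pow {R : Type*} [CommSemiring R] (x y : R)
    (m : ℕ) :
    ∑ j ∈ range (m + 1),
        ((2 * m).choose (2 * j) * (2 * j - 1)‼ * (2 * (m - j) - 1)‼ : R) * x ^ j * y ^ (m - j) =
      (2 * m - 1)‼ * (x + y) ^ m := by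
  rw [add_pow, mul_sum]
  refine sum_congr rfl fun j hj => ?_
  obtain ⟨l, rfl⟩ := Nat.exists_eq_add_of_le (Nat.lt_succ_iff.mp (mem_range.mp hj))
  rw [Nat.add_sub_cancel_left]
  have h := congrArg (Nat.cast : ℕ → R) (Nat.choose_two_mul_mul_doubleFactorial_s6 j l)
  push_cast at h
  rw [h]
  ring

theorem wick_renormalization_if_direction_general (n : ℕ)
    (C a : ℕ → ℝ)
    (hC0 : C 0 = 1)
    (hC : ∀ m, 1 ≤ m → m ≤ n → C (2 * m) = (Nat.doubleFactorial (2 * m - 1) : ℝ) * (C 2) ^ m)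
    (ha0 : a 0 = 1) (haodd : ∀ k, Odd k → a k = 0)
    (ha : ∀ m, 1 ≤ m → a (2 * m) = (Nat.doubleFactorial (2 * m - 1) : ℝ) * (a 2) ^ m) :
    ∀ m, 1 ≤ m → m ≤ n →
      (∑ k ∈ range (2 * m + 1), (Nat.choose (2 * m) k : ℝ) * C (2 * m - k) * a k) =
        (Nat.doubleFactorial (2 * m - 1) : ℝ) * (a 2 + C 2) ^ m := by
  intro m _ hmn
  have ha' (j : ℕ) : a (2 * j) = ((2 * j - 1)‼ : ℝ) * a 2 ^ j := by
    rcases j.eq_zero_or_pos with rfl | hj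
    · simp [ha0]
    · exact ha j hj
  have hC' (j : ℕ) (hj : j ≤ n) : C (2 * j) = ((2 * j - 1)‼ : ℝ) * C 2 ^ j := by
    rcases j.eq_zero_or_pos with rfl | hj₀
    · simp [hC0]
    · exact hC j hj₀ hj
  rw [sum_range_two_mul_add_one_of_odd _ (fun k hk => by rw [haodd k hk, mul_zero]),
    ← sum_choose_two_mul_mul_doubleFactorial_mul_pow]
  refine sum_congr rfl fun j hj => ?_
  have hjm : j ≤ m := Nat.lt_succ_iff.mp (mem_range.mp hj)
  rw [← Nat.mul_sub, hC' (m - j) (by omega), ha' j]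
  ring

theorem wick_renormalization_if_direction (n : ℕ)
    (C a : ℕ → ℝ)
    (hC0 : C 0 = 1) (hCodd : ∀ j, Odd j → C j = 0)
    (hC : ∀ m, 1 ≤ m → m ≤ n → C (2 * m) = (Nat.doubleFactorial (2 * m - 1) : ℝ) * (C 2) ^ m)
    (ha0 : a 0 = 1) (haodd : ∀ k, Odd k → a k = 0)
    (ha : ∀ m, 1 ≤ m → a (2 * m) = (Nat.doubleFactorial (2 * m - 1) : ℝ) * (a 2) ^ m) :
    ∀ m, 1 ≤ m → m ≤ n →
      (∑ k ∈ range (2 * m + 1), (Nat.choose (2 * m) k : ℝ) * C (2 * m - k) * a k) =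
        (Nat.doubleFactorial (2 * m - 1) : ℝ) * (a 2 + C 2) ^ m :=
  wick_renormalization_if_direction_general n C a hC0 hC ha0 haodd ha
end
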